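/- arXiv:1208.5059 — 2 statements merged into one kernel-verified Lean document; each statement's English description precedes it below -/
import Mathlib

section
/- The cyclotomic-type polynomial 1 - t + t^2 - t^3 + t^4 (the 10th cyclotomic polynomial Φ_10 up to sign of variable) is irreducible over ℚ and has no Fox–Milnor factorization: it cannot be written as ± t^k f(t) f(1/t) for any integer polynomial f. -/
open Polynomial

lemma cyclo10 (R : Type*) [CommRing R] :
    cyclotomic 10 R = X ^ 4 - X ^ 3 + X ^ 2 - X + 1 := by
  symm
  rw [eq_cyclotomic_iff (by norm_num)]
  have : Nat.properDivisors 10 = {1, 2, 5} := by decide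
  rw [this]
  simp [Finset.prod_insert, cyclotomic_one, cyclotomic_two,
    @cyclotomic_prime R _ 5 ⟨by norm_num⟩, Finset.sum_range_succ]
  ring

/-- The 10th cyclotomic polynomial `t⁴ - t³ + t² - t + 1` is irreducible over
ℚ and admits no Fox–Milnor factorization: it cannot be written as
`± t^k f(t) f(1/t)` (i.e. `X^k · (± Φ) = X^l · f · reverse f`) for any integer
polynomial `f`. -/
theorem stmt_18 :
    Irreducible (X ^ 4 - X ^ 3 + X ^ 2 - X + 1 : Polynomial ℚ) ∧
    ¬ ∃ (f : Polynomial ℤ) (k l : ℕ) (ε : ℤˣ),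
        X ^ k * (C (ε : ℤ) * (X ^ 4 - X ^ 3 + X ^ 2 - X + 1 : Polynomial ℤ)) =
          X ^ l * (f * f.reverse) := by
  constructor
  · rw [← cyclo10]
    exact cyclotomic.irreducible_rat (by norm_num)
  · rintro ⟨f, k, l, ε, h⟩
    set Φ : Polynomial ℤ := X ^ 4 - X ^ 3 + X ^ 2 - X + 1 with hΦdef
    have hΦcyc : Φ = cyclotomic 10 ℤ := (cyclo10 ℤ).symm
    have hirr : Irreducible Φ := hΦcyc ▸ cyclotomic.irreducible (by norm_num)
    have hprime : Prime Φ := hirr.prime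
    have hΦ0 : Φ ≠ 0 := hirr.ne_zero
    have hΦdeg : Φ.natDegree = 4 := by rw [hΦdef]; compute_degree!
    have hΦc0 : Φ.coeff 0 = 1 := by
      simp [hΦdef, coeff_one]
    have hΦtd : Φ.natTrailingDegree = 0 := by
      rw [natTrailingDegree_eq_zero, hΦc0]; right; norm_num
    have hε : (C (ε : ℤ)) ≠ 0 := by simp
    have hf : f ≠ 0 := by
      rintro rfl
      simp only [zero_mul, mul_zero] at h
      exact (mul_ne_zero (pow_ne_zero k X_ne_zero) (mul_ne_zero hε hΦ0)) h
    have hrf : f.reverse ≠ 0 := fun hh => hf (reverse_eq_zero.mp hh)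
    set d := f.natDegree
    set m := f.natTrailingDegree
    have hmd : m ≤ d := f.natTrailingDegree_le_natDegree
    -- natDegree equation
    have h1 : k + 4 = l + (d + (d - m)) := by
      have := congrArg natDegree h
      rwa [natDegree_mul (pow_ne_zero _ X_ne_zero) (mul_ne_zero hε hΦ0),
        natDegree_mul hε hΦ0, natDegree_X_pow, natDegree_C, zero_add, hΦdeg,
        natDegree_mul (pow_ne_zero _ X_ne_zero) (mul_ne_zero hf hrf),
        natDegree_mul hf hrf, natDegree_X_pow, reverse_natDegree] at this
    -- natTrailingDegree equation
    have h2 : k = l + m := by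
      have := congrArg natTrailingDegree h
      rw [mul_comm ((X : Polynomial ℤ) ^ k), mul_comm ((X : Polynomial ℤ) ^ l),
        natTrailingDegree_mul_X_pow (mul_ne_zero hε hΦ0),
        natTrailingDegree_mul_X_pow (mul_ne_zero hf hrf),
        natTrailingDegree_mul hε hΦ0, natTrailingDegree_mul hf hrf,
        natTrailingDegree_C, hΦtd, natTrailingDegree_reverse, add_zero,
        zero_add, add_zero] at this
      exact this.trans (add_comm _ _)
    have hrevdeg : f.reverse.natDegree = 2 := by
      rw [reverse_natDegree]; omega
    -- divisibility
    have hdvd : Φ ∣ X ^ l * (f * f.reverse) := h ▸ (Dvd.dvd.mul_left (dvd_mul_left Φ _) _)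
    rcases hprime.dvd_mul.mp hdvd with h3 | h3
    · have h4 : Φ ∣ X := hprime.dvd_of_dvd_pow h3
      have := natDegree_le_of_dvd h4 X_ne_zero
      rw [hΦdeg, natDegree_X] at this
      omega
    · rcases hprime.dvd_mul.mp h3 with h4 | h4
      · obtain ⟨g, rfl⟩ := h4
        have hg : g ≠ 0 := fun hh => hf (by rw [hh, mul_zero])
        have hrg : g.reverse ≠ 0 := fun hh => hg (reverse_eq_zero.mp hh)
        have hrΦ : Φ.reverse ≠ 0 := fun hh => hΦ0 (reverse_eq_zero.mp hh)
        rw [reverse_mul_of_domain, natDegree_mul hrΦ hrg, reverse_natDegree,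
          hΦdeg, hΦtd] at hrevdeg
        omega
      · have := natDegree_le_of_dvd h4 hrf
        rw [hΦdeg, hrevdeg] at this
        omega
end

section
/- Suppose the Levine–Tristram signature function ω ↦ σ_ω(K) is a concordance invariant and can jump only at roots of the Alexander polynomial. If σ_ω(K) has a jump of size 4 at a root ω_0 of (1 - t + t^2), then for any knot K' concordant to K, (1 - t + t^2) divides Δ_{K'}(t), and by the Fox–Milnor symmetry in fact (1 - t + t^2)^2 divides Δ_{K'}(t)·(unit); hence deg Δ_{K'} ≥ 4 + deg(remaining forced factors). -/
open Polynomial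

private lemma stmt19_p_monic : (1 - X + X ^ 2 : Polynomial ℤ).Monic := by monicity!

private lemma stmt19_p_natDegree : (1 - X + X ^ 2 : Polynomial ℤ).natDegree = 2 := by
  compute_degree!

private lemma stmt19_cyclo : cyclotomic 6 ℤ = (1 - X + X ^ 2 : Polynomial ℤ) := by
  have h := prod_cyclotomic_eq_X_pow_sub_one (by norm_num : 0 < 6) ℤ
  have hd : (Nat.divisors 6) = ({1, 2, 3, 6} : Finset ℕ) := by decide
  rw [hd] at h
  rw [show ({1,2,3,6} : Finset ℕ) = insert 1 (insert 2 (insert 3 {6})) from rfl,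
    Finset.prod_insert (by decide), Finset.prod_insert (by decide),
    Finset.prod_insert (by decide), Finset.prod_singleton,
    cyclotomic_one, cyclotomic_two, cyclotomic_three] at h
  have hq : ((X - 1) * ((X + 1) * (X ^ 2 + X + 1)) : Polynomial ℤ) ≠ 0 := by
    intro h0
    have := congrArg (Polynomial.eval (2 : ℤ)) h0
    norm_num at this
  apply mul_left_cancel₀ hq
  rw [mul_assoc, mul_assoc, h]; ring

private lemma stmt19_p_irred : Irreducible (1 - X + X ^ 2 : Polynomial ℤ) :=
  stmt19_cyclo ▸ cyclotomic.irreducible (by norm_num)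

private lemma stmt19_p_prime : Prime (1 - X + X ^ 2 : Polynomial ℤ) :=
  UniqueFactorizationMonoid.irreducible_iff_prime.mp stmt19_p_irred

private lemma stmt19_dvd_of_root (z : ℂ) (f : Polynomial ℤ)
    (hroot : Polynomial.aeval z (1 - X + X ^ 2 : Polynomial ℤ) = 0)
    (hf : Polynomial.aeval z f = 0) : (1 - X + X ^ 2 : Polynomial ℤ) ∣ f := by
  have hint : IsIntegral ℤ z := ⟨_, stmt19_p_monic, hroot⟩
  have h1 : minpoly ℤ z ∣ (1 - X + X ^ 2 : Polynomial ℤ) :=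
    minpoly.isIntegrallyClosed_dvd hint hroot
  have h2 : minpoly ℤ z ∣ f := minpoly.isIntegrallyClosed_dvd hint hf
  obtain ⟨e, he⟩ := h1
  rcases stmt19_p_irred.isUnit_or_isUnit he with hu | hu
  · exact absurd ((minpoly.monic hint).eq_one_of_isUnit hu)
      (by intro h1; have := minpoly.aeval ℤ z; rw [h1] at this; simp at this)
  · obtain ⟨u, rfl⟩ := hu
    refine dvd_trans ⟨(↑u⁻¹ : Polynomial ℤ), ?_⟩ h2
    rw [he, mul_assoc, Units.mul_inv, mul_one]

private lemma stmt19_rev :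
    (1 - X + X ^ 2 : Polynomial ℤ).reverse = (1 - X + X ^ 2 : Polynomial ℤ) := by
  have key : ((1 : Polynomial ℤ) - X ^ 1 + X ^ 2).reverse = 1 - X ^ 1 + X ^ 2 := by
    unfold Polynomial.reverse
    have hd : ((1 : Polynomial ℤ) - X ^ 1 + X ^ 2).natDegree = 2 := by compute_degree!
    rw [hd, reflect_add, reflect_sub, reflect_one, reflect_monomial, reflect_monomial,
      revAt_le (by norm_num), revAt_le (by norm_num)]
    norm_num
    ring
  simpa using key

private lemma stmt19_rev_pow (n : ℕ) :
    ((1 - X + X ^ 2 : Polynomial ℤ) ^ n).reverse = (1 - X + X ^ 2 : Polynomial ℤ) ^ n := by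
  induction n with
  | zero => simpa using (reverse_C (1 : ℤ))
  | succ n ih => rw [pow_succ, reverse_mul_of_domain, ih, stmt19_rev]

/-- If the reverse of `c` is divisible by `p = 1 - X + X²`, so is `c`
(given a root `z ≠ 0` of `p` over `ℂ`). -/
private lemma stmt19_dvd_of_dvd_rev (z : ℂ) (hz : 1 - z + z ^ 2 = 0) (c : Polynomial ℤ)
    (h : (1 - X + X ^ 2 : Polynomial ℤ) ∣ c.reverse) :
    (1 - X + X ^ 2 : Polynomial ℤ) ∣ c := by
  have hz0 : z ≠ 0 := by rintro rfl; norm_num at hz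
  have hzinv : (1 : ℂ) - z⁻¹ + (z⁻¹) ^ 2 = 0 := by
    have hrw : (1 : ℂ) - z⁻¹ + (z⁻¹) ^ 2 = (1 - z + z ^ 2) * (z⁻¹) ^ 2 := by
      field_simp
      ring
    rw [hrw, hz, zero_mul]
  have hrootz : Polynomial.aeval z (1 - X + X ^ 2 : Polynomial ℤ) = 0 := by simpa using hz
  -- `aeval z c.reverse = 0` since `p ∣ c.reverse`
  have hrev0 : Polynomial.aeval z c.reverse = 0 := by
    obtain ⟨d, hd⟩ := h
    rw [hd, map_mul, hrootz, zero_mul]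
  -- transfer to `aeval z⁻¹ c = 0`
  haveI : Invertible (z⁻¹) := invertibleOfNonzero (inv_ne_zero hz0)
  have h2 : Polynomial.eval₂ (algebraMap ℤ ℂ) (z⁻¹) c = 0 := by
    rw [← Polynomial.eval₂_reverse_eq_zero_iff (algebraMap ℤ ℂ) (z⁻¹) c]
    have : (⅟(z⁻¹) : ℂ) = z := by rw [invOf_eq_inv, inv_inv]
    rw [this]
    exact hrev0
  exact stmt19_dvd_of_root (z⁻¹) c (by simpa using hzinv) h2

/-- Axiomatized Levine–Tristram signature argument (as used for `11n_81`).
Assume: (i) the signature function `σ` is a concordance invariant;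
(ii) a jump of `σ_{K'}` at `ω₀` forces `Δ_{K'}(ω₀) = 0`; (iii) Fox–Milnor: for
`K'` concordant to `K`, `Δ_K · Δ_{K'} ≐ h(t) h(1/t)` for some `h`; and the
multiplicity of `p = 1 - t + t²` in `Δ_K` is even.  If `σ_K` has a jump (of
size 4) at a root `ω₀` of `1 - t + t²`, then for every knot `K'` concordant to
`K`, `(1 - t + t²)` divides `Δ_{K'}`; in fact `(1 - t + t²)²` divides
`Δ_{K'}`, hence `deg Δ_{K'} ≥ 4`. -/
theorem stmt_19 (Knot : Type) (conc : Knot → Knot → Prop)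
    (σ : Knot → ℂ → ℤ) (Δ : Knot → Polynomial ℤ)
    (Jump : (ℂ → ℤ) → ℂ → ℤ → Prop)
    (hne : ∀ J, Δ J ≠ 0)
    (hσinv : ∀ K K', conc K K' → σ K = σ K')
    (hjumproot : ∀ (K' : Knot) (ω : ℂ) (s : ℤ), s ≠ 0 → Jump (σ K') ω s →
      Polynomial.aeval ω (Δ K') = 0)
    (hFM : ∀ K K', conc K K' → ∃ (h : Polynomial ℤ) (k l : ℕ) (ε : ℤˣ),
      C (ε : ℤ) * X ^ k * (Δ K * Δ K') = X ^ l * (h * h.reverse))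
    (K : Knot) (ω₀ : ℂ) (hω₀ : 1 - ω₀ + ω₀ ^ 2 = 0)
    (hjump : Jump (σ K) ω₀ 4)
    (hΔK : ∀ m : ℕ, (1 - X + X ^ 2 : Polynomial ℤ) ^ m ∣ Δ K →
      ¬ (1 - X + X ^ 2 : Polynomial ℤ) ^ (m + 1) ∣ Δ K → Even m) :
    ∀ K', conc K K' →
      (1 - X + X ^ 2 : Polynomial ℤ) ∣ Δ K' ∧
      (1 - X + X ^ 2 : Polynomial ℤ) ^ 2 ∣ Δ K' ∧
      4 ≤ (Δ K').natDegree := by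
  intro K' hKK'
  set p : Polynomial ℤ := 1 - X + X ^ 2 with hp_def
  have hp : Prime p := stmt19_p_prime
  have hpne : p ≠ 0 := hp.ne_zero
  -- Step 1: p ∣ Δ K'
  have hjump' : Jump (σ K') ω₀ 4 := by rw [← hσinv K K' hKK']; exact hjump
  have haeval : Polynomial.aeval ω₀ (Δ K') = 0 :=
    hjumproot K' ω₀ 4 (by norm_num) hjump'
  have hdvd1 : p ∣ Δ K' := stmt19_dvd_of_root ω₀ (Δ K') (by simpa using hω₀) haeval
  -- multiplicity machinery
  have fin : ∀ f : Polynomial ℤ, f ≠ 0 → FiniteMultiplicity p f := fun f hf =>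
    FiniteMultiplicity.of_not_isUnit hp.not_isUnit hf
  have fmul : ∀ a b : Polynomial ℤ, a ≠ 0 → b ≠ 0 →
      multiplicity p (a * b) = multiplicity p a + multiplicity p b := fun a b ha hb =>
    multiplicity_mul hp (fin _ (mul_ne_zero ha hb))
  obtain ⟨h, k, l, ε, hFMeq⟩ := hFM K K' hKK'
  have hKne := hne K
  have hK'ne := hne K'
  have hCε : (C (ε : ℤ) : Polynomial ℤ) ≠ 0 := by
    simp only [ne_eq, C_eq_zero]
    exact ε.ne_zero
  have hXk : (X ^ k : Polynomial ℤ) ≠ 0 := pow_ne_zero _ X_ne_zero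
  have hXl : (X ^ l : Polynomial ℤ) ≠ 0 := pow_ne_zero _ X_ne_zero
  have hL : C (ε : ℤ) * X ^ k * (Δ K * Δ K') ≠ 0 :=
    mul_ne_zero (mul_ne_zero hCε hXk) (mul_ne_zero hKne hK'ne)
  have hR : X ^ l * (h * h.reverse) ≠ 0 := hFMeq ▸ hL
  have hhhr : h * h.reverse ≠ 0 := right_ne_zero_of_mul hR
  have hh : h ≠ 0 := left_ne_zero_of_mul hhhr
  have hhr : h.reverse ≠ 0 := right_ne_zero_of_mul hhhr
  -- multiplicity of p in units and powers of X is zero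
  have hmCε : multiplicity p (C (ε : ℤ)) = 0 :=
    multiplicity_eq_zero.mpr fun hd => hp.not_unit
      (isUnit_of_dvd_unit hd (isUnit_C.mpr ε.isUnit))
  have hpX : ∀ m : ℕ, multiplicity p (X ^ m : Polynomial ℤ) = 0 := by
    intro m
    refine multiplicity_eq_zero.mpr fun hd => ?_
    have hdX : p ∣ (X : Polynomial ℤ) := hp.dvd_of_dvd_pow hd
    have := Polynomial.natDegree_le_of_dvd hdX X_ne_zero
    rw [stmt19_p_natDegree, natDegree_X] at this
    omega
  -- multiplicity of reverse equals multiplicity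
  have hrev_eq : multiplicity p h.reverse = multiplicity p h := by
    obtain ⟨c, hhc, hpc⟩ := (fin h hh).exists_eq_pow_mul_and_not_dvd
    have hhrev : h.reverse = p ^ multiplicity p h * c.reverse := by
      conv_lhs => rw [hhc]
      rw [reverse_mul_of_domain]
      congr 1
      rw [hp_def]
      exact stmt19_rev_pow _
    have hpcr : ¬ p ∣ c.reverse := fun hd => hpc (stmt19_dvd_of_dvd_rev ω₀ hω₀ c hd)
    refine multiplicity_eq_of_dvd_of_not_dvd ⟨c.reverse, hhrev⟩ ?_
    intro hdvd
    rw [hhrev, pow_succ] at hdvd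
    exact hpcr ((mul_dvd_mul_iff_left (pow_ne_zero _ hpne)).mp hdvd)
  -- the key multiplicity identity from Fox–Milnor
  have e1 : multiplicity p (C (ε : ℤ) * X ^ k * (Δ K * Δ K')) =
      multiplicity p (Δ K) + multiplicity p (Δ K') := by
    rw [fmul _ _ (mul_ne_zero hCε hXk) (mul_ne_zero hKne hK'ne), fmul _ _ hCε hXk,
      fmul _ _ hKne hK'ne, hmCε, hpX k, zero_add, zero_add]
  have e2 : multiplicity p (X ^ l * (h * h.reverse)) =
      multiplicity p h + multiplicity p h := by
    rw [fmul _ _ hXl hhhr, fmul _ _ hh hhr, hpX l, zero_add, hrev_eq]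
  have key : multiplicity p (Δ K) + multiplicity p (Δ K') =
      multiplicity p h + multiplicity p h := by
    rw [← e1, ← e2, hFMeq]
  -- multiplicity of p in Δ K is even
  have hKeven : Even (multiplicity p (Δ K)) := by
    refine hΔK (multiplicity p (Δ K)) (pow_multiplicity_dvd p (Δ K)) ?_
    exact (fin _ hKne).not_pow_dvd_of_multiplicity_lt (lt_add_one _)
  -- hence multiplicity of p in Δ K' is even and positive, so at least 2
  have hK'even : Even (multiplicity p (Δ K')) := by
    have hsum : Even (multiplicity p (Δ K) + multiplicity p (Δ K')) := by
      rw [key]; exact ⟨multiplicity p h, rfl⟩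
    rcases Nat.even_add.mp hsum with hiff
    exact hiff.mp hKeven
  have hpos : 1 ≤ multiplicity p (Δ K') :=
    (fin _ hK'ne).le_multiplicity_of_pow_dvd (by simpa using hdvd1)
  have h2le : 2 ≤ multiplicity p (Δ K') := by
    obtain ⟨r, hr⟩ := hK'even
    omega
  have hdvd2 : p ^ 2 ∣ Δ K' := pow_dvd_of_le_multiplicity h2le
  refine ⟨hdvd1, hdvd2, ?_⟩
  have := Polynomial.natDegree_le_of_dvd hdvd2 hK'ne
  rwa [natDegree_pow, stmt19_p_natDegree] at this
end
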